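/- arXiv:1302.7013 — 5 statements merged into one kernel-verified Lean document; each statement's English description precedes it below -/
import Mathlib

section
/- If (A,u,p,b) : ℝ₊ → ℝ⁴₊ is a nonnegative C¹ solution of the ODE system A' = αuⁿ − μA, u' = λᵤ − γᵤu − τup + σb − αnuⁿ − ρuA, p' = λₚ − γₚp − τup + σb, b' = τup − (σ+δ)b, then the quantity V = nA + u + p + 2b satisfies the differential inequality V' ≤ λ − mV, where λ = λᵤ + λₚ and m = min{μ, γᵤ, γₚ, δ}. -/
/-- The quantity `V = n A + u + p + 2 b` along a nonnegative solution of the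
Alzheimer ODE system satisfies `V' ≤ λ - m V` with `λ = λᵤ + λₚ` and
`m = min {μ, γᵤ, γₚ, δ}`. -/
theorem lyapunov_diff_ineq
    (lamu lamp gu gp tau sig del rho mu alpha : ℝ)
    (hlamu : 0 < lamu) (hlamp : 0 < lamp) (hgu : 0 < gu) (hgp : 0 < gp)
    (htau : 0 < tau) (hsig : 0 < sig) (hdel : 0 < del) (hrho : 0 < rho)
    (hmu : 0 < mu) (halpha : 0 < alpha)
    (n : ℕ) (hn : 1 ≤ n)
    (A u p b : ℝ → ℝ)
    (hA : ∀ t, 0 ≤ t → HasDerivAt A (alpha * u t ^ n - mu * A t) t)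
    (hu : ∀ t, 0 ≤ t → HasDerivAt u
      (lamu - gu * u t - tau * u t * p t + sig * b t - alpha * n * u t ^ n
        - rho * u t * A t) t)
    (hp : ∀ t, 0 ≤ t → HasDerivAt p (lamp - gp * p t - tau * u t * p t + sig * b t) t)
    (hb : ∀ t, 0 ≤ t → HasDerivAt b (tau * u t * p t - (sig + del) * b t) t)
    (hpos : ∀ t, 0 ≤ t → 0 ≤ A t ∧ 0 ≤ u t ∧ 0 ≤ p t ∧ 0 ≤ b t) :
    ∀ t, 0 ≤ t →
      deriv (fun s => n * A s + u s + p s + 2 * b s) t ≤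
        (lamu + lamp) - min (min (min mu gu) gp) del *
          (n * A t + u t + p t + 2 * b t) := by
  intro t ht
  obtain ⟨hA0, hu0, hp0, hb0⟩ := hpos t ht
  have hd : HasDerivAt (fun s => (n:ℝ) * A s + u s + p s + 2 * b s)
      ((n:ℝ) * (alpha * u t ^ n - mu * A t)
        + (lamu - gu * u t - tau * u t * p t + sig * b t - alpha * n * u t ^ n
            - rho * u t * A t)
        + (lamp - gp * p t - tau * u t * p t + sig * b t)
        + 2 * (tau * u t * p t - (sig + del) * b t)) t := by
    exact (((((hA t ht).const_mul (n:ℝ)).add (hu t ht)).add (hp t ht)).add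
      ((hb t ht).const_mul 2))
  rw [hd.deriv]
  set m := min (min (min mu gu) gp) del with hm
  have hm1 : m ≤ mu := le_trans (le_trans (min_le_left _ _) (min_le_left _ _)) (min_le_left _ _)
  have hm2 : m ≤ gu := le_trans (le_trans (min_le_left _ _) (min_le_left _ _)) (min_le_right _ _)
  have hm3 : m ≤ gp := le_trans (min_le_left _ _) (min_le_right _ _)
  have hm4 : m ≤ del := min_le_right _ _
  have hn0 : (0:ℝ) ≤ (n:ℝ) := by positivity
  nlinarith [mul_nonneg hu0 hA0, mul_nonneg hn0 hA0, mul_nonneg (sub_nonneg.2 hm1) (mul_nonneg hn0 hA0),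
    mul_nonneg (sub_nonneg.2 hm2) hu0, mul_nonneg (sub_nonneg.2 hm3) hp0,
    mul_nonneg (sub_nonneg.2 hm4) hb0, mul_nonneg hrho.le (mul_nonneg hu0 hA0)]
end

section
/- For any initial data (Aⁱⁿ, uⁱⁿ, pⁱⁿ, bⁱⁿ) ∈ ℝ⁴₊ there exists a unique nonnegative bounded solution (A,u,p,b) ∈ C¹ᵦ(ℝ₊)⁴, defined for all t > 0, of the ODE system A' = αuⁿ − μA, u' = λᵤ − γᵤu − τup + σb − αnuⁿ − ρuA, p' = λₚ − γₚp − τup + σb, b' = τup − (σ+δ)b, and the solution remains in the set S = {(A,u,p,b) ∈ ℝ⁴₊ : nA + u + p + 2b ≤ nAⁱⁿ + uⁱⁿ + pⁱⁿ + 2bⁱⁿ + λ/m} where λ = λᵤ + λₚ and m = min{μ, γᵤ, γₚ, δ}. -/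
/-!
Clipping every coordinate to `[0, M]` turns the vector field into a bounded, globally Lipschitz
one, whose flow exists for all times by Picard–Lindelöf. Along this clipped flow each coordinate
stays nonnegative, because on a face of the orthant the field points inwards, and the weighted
mass `V = n A + u + p + 2 b` obeys `V' ≤ λ - m min(V, M)`. Hence `V` never exceeds
`B = V(0) + λ / m`, and for `M > B` the clipping is never active: the clipped flow solves the
original system. Uniqueness holds because the field is Lipschitz on the compact image of any
`[0, T]` under two solutions.
-/

open Set Metric Filter Topology NNReal

theorem le_of_hasDerivAt_of_deriv_nonpos_of_gt {f f' : ℝ → ℝ} {a B : ℝ}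
    (hf : ∀ t, a ≤ t → HasDerivAt f (f' t) t) (ha : f a ≤ B)
    (hf' : ∀ t, a ≤ t → B < f t → f' t ≤ 0) {t : ℝ} (ht : a ≤ t) : f t ≤ B := by
  -- compare `f` with the strict fences `B + δ (s - a + 1)` and let `δ → 0`
  refine le_of_forall_pos_le_add fun ε hε => ?_
  have hlen : 0 < t - a + 1 := by linarith
  set δ := ε / (t - a + 1)
  have hδ : 0 < δ := by positivity
  have hfence := image_le_of_deriv_right_lt_deriv_boundary (a := a) (b := t)
    (B := fun s => B + δ * (s - a + 1)) (B' := fun _ => δ)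
    (fun s hs => (hf s hs.1).continuousAt.continuousWithinAt)
    (fun s hs => (hf s hs.1).hasDerivWithinAt) (by simp; linarith)
    (fun s => by
      simpa using ((hasDerivAt_id s).sub_const a |>.add_const 1).const_mul δ |>.const_add B)
    (fun s hs hfs => (hf' s hs.1 (by nlinarith [hs.1])).trans_lt hδ) ⟨ht, le_rfl⟩
  calc f t ≤ B + δ * (t - a + 1) := hfence
    _ = B + ε := by simp only [δ]; field_simp

theorem nonneg_of_hasDerivAt_of_deriv_nonneg_of_neg {f f' : ℝ → ℝ} {a : ℝ}
    (hf : ∀ t, a ≤ t → HasDerivAt f (f' t) t) (ha : 0 ≤ f a)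
    (hf' : ∀ t, a ≤ t → f t < 0 → 0 ≤ f' t) {t : ℝ} (ht : a ≤ t) : 0 ≤ f t :=
  neg_nonpos.mp <| le_of_hasDerivAt_of_deriv_nonpos_of_gt (fun s hs => (hf s hs).neg)
    (neg_nonpos.mpr ha) (fun s hs hs' => neg_nonpos.mpr (hf' s hs (neg_pos.mp hs'))) ht

section Product

variable {𝕜 E F : Type*} [NontriviallyNormedField 𝕜] [NormedAddCommGroup E] [NormedSpace 𝕜 E]
  [NormedAddCommGroup F] [NormedSpace 𝕜 F] {f : 𝕜 → E × F} {v : E × F} {t : 𝕜}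

theorem HasDerivAt.fst (h : HasDerivAt f v t) : HasDerivAt (fun s => (f s).1) v.1 t := by
  simpa using h.hasFDerivAt.fst.hasDerivAt

theorem HasDerivAt.snd (h : HasDerivAt f v t) : HasDerivAt (fun s => (f s).2) v.2 t := by
  simpa using h.hasFDerivAt.snd.hasDerivAt

end Product

theorem LipschitzWith.prodMap {α β γ δ : Type*} [PseudoEMetricSpace α] [PseudoEMetricSpace β]
    [PseudoEMetricSpace γ] [PseudoEMetricSpace δ] {f : α → β} {g : γ → δ} {Kf Kg : ℝ≥0}
    (hf : LipschitzWith Kf f) (hg : LipschitzWith Kg g) :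
    LipschitzWith (max Kf Kg) (Prod.map f g) := by
  simpa using! (hf.comp LipschitzWith.prod_fst).prodMk (hg.comp LipschitzWith.prod_snd)

section Flow

variable {E : Type*} [NormedAddCommGroup E] [NormedSpace ℝ E]

theorem ODE_solution_unique_Ici_of_locallyLipschitz {v : E → E} (hv : LocallyLipschitz v)
    {f g : ℝ → E} {a : ℝ} (hf : ∀ t, a ≤ t → HasDerivAt f (v (f t)) t)
    (hg : ∀ t, a ≤ t → HasDerivAt g (v (g t)) t) (ha : f a = g a) : EqOn f g (Ici a) := by
  intro T hT
  have hfc : ContinuousOn f (Icc a T) := fun s hs => (hf s hs.1).continuousAt.continuousWithinAt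
  have hgc : ContinuousOn g (Icc a T) := fun s hs => (hg s hs.1).continuousAt.continuousWithinAt
  obtain ⟨K, hK⟩ := hv.locallyLipschitzOn.exists_lipschitzOnWith_of_compact
    ((isCompact_Icc.image_of_continuousOn hfc).union (isCompact_Icc.image_of_continuousOn hgc))
  exact ODE_solution_unique_of_mem_Icc_right (v := fun _ => v) (fun _ _ => hK)
    hfc (fun s hs => (hf s hs.1).hasDerivWithinAt)
    (fun s hs => Or.inl (mem_image_of_mem f (Ico_subset_Icc_self hs)))
    hgc (fun s hs => (hg s hs.1).hasDerivWithinAt)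
    (fun s hs => Or.inr (mem_image_of_mem g (Ico_subset_Icc_self hs))) ha ⟨hT, le_rfl⟩

variable [CompleteSpace E] {v : E → E} {K : ℝ≥0} {C : ℝ}

theorem exists_forall_mem_Ioo_hasDerivAt_of_lipschitzWith_of_norm_le (hv : LipschitzWith K v)
    (hC : ∀ x, ‖v x‖ ≤ C) (x₀ : E) {T : ℝ} (hT : 0 ≤ T) :
    ∃ f : ℝ → E, f 0 = x₀ ∧ ∀ t ∈ Ioo (-T) T, HasDerivAt f (v (f t)) t := by
  have hC0 : 0 ≤ C := (norm_nonneg _).trans (hC x₀)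
  have hpl : IsPicardLindelof (fun _ => v) (tmin := -T) (tmax := T)
      ⟨0, by simpa using hT⟩ x₀ (⟨C, hC0⟩ * ⟨T, hT⟩) 0 ⟨C, hC0⟩ K :=
    { lipschitzOnWith := fun _ _ => hv.lipschitzOnWith
      continuousOn := fun _ _ => continuousOn_const
      norm_le := fun _ _ x _ => hC x
      mul_max_le := by simp; exact le_rfl }
  obtain ⟨f, hf0, hf⟩ := hpl.exists_eq_forall_mem_Icc_hasDerivWithinAt₀
  exact ⟨f, hf0, fun t ht =>
    (hf t (Ioo_subset_Icc_self ht)).hasDerivAt (Icc_mem_nhds ht.1 ht.2)⟩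

theorem exists_forall_hasDerivAt_of_lipschitzWith_of_norm_le (hv : LipschitzWith K v)
    (hC : ∀ x, ‖v x‖ ≤ C) (x₀ : E) : ∃ f : ℝ → E, f 0 = x₀ ∧ ∀ t, HasDerivAt f (v (f t)) t := by
  -- the local solutions on `(-k, k)` agree, so `t ↦ sol (⌊|t|⌋₊ + 1) t` is locally one of them
  choose sol hsol₀ hsol using fun T : ℕ =>
    exists_forall_mem_Ioo_hasDerivAt_of_lipschitzWith_of_norm_le hv hC x₀ T.cast_nonneg
  have hagree : ∀ j k : ℕ, j ≤ k → EqOn (sol j) (sol k) (Ioo (-j) j) := fun j k hjk t ht => by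
    have hjk' : Ioo (-j : ℝ) j ⊆ Ioo (-k) k :=
      Ioo_subset_Ioo (by gcongr) (by gcongr)
    exact ODE_solution_unique_of_mem_Ioo (v := fun _ => v) (s := fun _ => univ)
      (fun _ _ => hv.lipschitzOnWith) (t₀ := 0)
      ⟨by linarith [ht.1, ht.2], by linarith [ht.1, ht.2]⟩
      (fun s hs => ⟨hsol j s hs, trivial⟩) (fun s hs => ⟨hsol k s (hjk' hs), trivial⟩)
      (by rw [hsol₀, hsol₀]) ht
  have hmem : ∀ r : ℝ, r ∈ Ioo (-(⌊|r|⌋₊ + 1 : ℕ) : ℝ) (⌊|r|⌋₊ + 1 : ℕ) := fun r =>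
    abs_lt.mp (by exact_mod_cast Nat.lt_floor_add_one |r|)
  refine ⟨fun t => sol (⌊|t|⌋₊ + 1) t, hsol₀ _, fun t => ?_⟩
  have hlocal : (fun r => sol (⌊|r|⌋₊ + 1) r) =ᶠ[𝓝 t] sol (⌊|t|⌋₊ + 2) := by
    filter_upwards [ball_mem_nhds t one_pos] with r hr
    refine hagree _ _ ?_ (hmem r)
    have : |r| ≤ |t| + 1 := by
      have := abs_sub_abs_le_abs_sub r t
      rw [mem_ball, Real.dist_eq] at hr
      linarith
    have := Nat.floor_le_floor this
    rw [Nat.floor_add_one (abs_nonneg t)] at this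
    omega
  have hmem' : t ∈ Ioo (-(⌊|t|⌋₊ + 2 : ℕ) : ℝ) (⌊|t|⌋₊ + 2 : ℕ) :=
    Ioo_subset_Ioo (by push_cast; linarith) (by push_cast; linarith) (hmem t)
  exact (hsol _ t hmem').congr_of_eventuallyEq hlocal
    |>.congr_deriv (congrArg v hlocal.eq_of_nhds.symm)

theorem exists_forall_hasDerivAt_comp_of_isCompact {F P : E → E} (hF : LocallyLipschitz F)
    (hP : LipschitzWith K P) {s : Set E} (hs : IsCompact s) (hPs : ∀ x, P x ∈ s) (x₀ : E) :
    ∃ f : ℝ → E, f 0 = x₀ ∧ ∀ t, HasDerivAt f (F (P (f t))) t := by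
  obtain ⟨L, hL⟩ := hF.locallyLipschitzOn.exists_lipschitzOnWith_of_compact hs
  obtain ⟨C, hC⟩ := hs.exists_bound_of_continuousOn hF.continuous.continuousOn
  have hFP : LipschitzWith (L * K) (F ∘ P) :=
    lipschitzOnWith_univ.mp (hL.comp hP.lipschitzOnWith fun x _ => hPs x)
  exact exists_forall_hasDerivAt_of_lipschitzWith_of_norm_le hFP (fun x => hC _ (hPs x)) x₀

end Flow

theorem prod4_nonneg_iff {x : ℝ × ℝ × ℝ × ℝ} :
    0 ≤ x ↔ 0 ≤ x.1 ∧ 0 ≤ x.2.1 ∧ 0 ≤ x.2.2.1 ∧ 0 ≤ x.2.2.2 := by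
  simp [Prod.le_def]

def clip (M r : ℝ) : ℝ := max 0 (min r M)

theorem clip_nonneg (M r : ℝ) : 0 ≤ clip M r := le_max_left _ _

theorem clip_le {M : ℝ} (hM : 0 ≤ M) (r : ℝ) : clip M r ≤ M := max_le hM (min_le_right _ _)

theorem clip_of_neg (M : ℝ) {r : ℝ} (hr : r < 0) : clip M r = 0 :=
  max_eq_left ((min_le_left _ _).trans hr.le)

theorem clip_of_nonneg {M r : ℝ} (hM : 0 ≤ M) (hr : 0 ≤ r) : clip M r = min r M :=
  max_eq_right (le_min hr hM)

theorem lipschitzWith_clip (M : ℝ) : LipschitzWith 1 (clip M) :=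
  (LipschitzWith.id.min_const M).const_max 0

def boxClip (M : ℝ) : ℝ × ℝ × ℝ × ℝ → ℝ × ℝ × ℝ × ℝ :=
  Prod.map (clip M) (Prod.map (clip M) (Prod.map (clip M) (clip M)))

theorem lipschitzWith_boxClip (M : ℝ) : LipschitzWith 1 (boxClip M) := by
  have h := lipschitzWith_clip M
  simpa [boxClip] using h.prodMap (h.prodMap (h.prodMap h))

theorem boxClip_mem_Icc {M : ℝ} (hM : 0 ≤ M) (x : ℝ × ℝ × ℝ × ℝ) :
    boxClip M x ∈ Icc 0 (M, M, M, M) := by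
  simp [boxClip, Prod.le_def, clip_nonneg, clip_le hM]

theorem boxClip_nonneg (M : ℝ) (x : ℝ × ℝ × ℝ × ℝ) : 0 ≤ boxClip M x :=
  prod4_nonneg_iff.mpr ⟨clip_nonneg _ _, clip_nonneg _ _, clip_nonneg _ _, clip_nonneg _ _⟩

def weightedMass (n : ℕ) (x : ℝ × ℝ × ℝ × ℝ) : ℝ := n * x.1 + x.2.1 + x.2.2.1 + 2 * x.2.2.2

theorem HasDerivAt.weightedMass {x : ℝ → ℝ × ℝ × ℝ × ℝ} {x' : ℝ × ℝ × ℝ × ℝ} {t : ℝ}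
    (h : HasDerivAt x x' t) (n : ℕ) :
    HasDerivAt (fun s => weightedMass n (x s)) (weightedMass n x') t :=
  (((h.fst.const_mul _).add h.snd.fst).add h.snd.snd.fst).add (h.snd.snd.snd.const_mul 2)

theorem weightedMass_nonneg (n : ℕ) {x : ℝ × ℝ × ℝ × ℝ} (hx : 0 ≤ x) : 0 ≤ weightedMass n x := by
  obtain ⟨hA, hu, hp, hb⟩ := prod4_nonneg_iff.mp hx
  unfold weightedMass
  positivity

theorem min_weightedMass_le_weightedMass_boxClip {n : ℕ} (hn : 1 ≤ n) {M : ℝ} (hM : 0 ≤ M)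
    {x : ℝ × ℝ × ℝ × ℝ} (hx : 0 ≤ x) :
    min (weightedMass n x) M ≤ weightedMass n (boxClip M x) := by
  obtain ⟨hA, hu, hp, hb⟩ := prod4_nonneg_iff.mp hx
  have hn' : (1 : ℝ) ≤ n := by exact_mod_cast hn
  simp only [weightedMass, boxClip, Prod.map_fst, Prod.map_snd, clip_of_nonneg hM, hA, hu, hp, hb]
  simp only [min_def]
  split_ifs <;> nlinarith

theorem boxClip_eq_self {n : ℕ} (hn : 1 ≤ n) {M : ℝ} {x : ℝ × ℝ × ℝ × ℝ} (hx : 0 ≤ x)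
    (hxM : weightedMass n x ≤ M) : boxClip M x = x := by
  obtain ⟨hA, hu, hp, hb⟩ := prod4_nonneg_iff.mp hx
  have hn' : (1 : ℝ) ≤ n := by exact_mod_cast hn
  have hle : ∀ r, 0 ≤ r → r ≤ M → clip M r = r := fun r h0 h1 => by
    rw [clip_of_nonneg (h0.trans h1) h0, min_eq_left h1]
  simp only [weightedMass] at hxM
  simp only [boxClip, Prod.map, hle _ hA (by nlinarith), hle _ hu (by nlinarith),
    hle _ hp (by nlinarith), hle _ hb (by nlinarith)]

def alzheimerField (lamu lamp gu gp tau sig del rho mu alpha : ℝ) (n : ℕ)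
    (x : ℝ × ℝ × ℝ × ℝ) : ℝ × ℝ × ℝ × ℝ :=
  (alpha * x.2.1 ^ n - mu * x.1,
   lamu - gu * x.2.1 - tau * x.2.1 * x.2.2.1 + sig * x.2.2.2 - alpha * n * x.2.1 ^ n
     - rho * x.2.1 * x.1,
   lamp - gp * x.2.2.1 - tau * x.2.1 * x.2.2.1 + sig * x.2.2.2,
   tau * x.2.1 * x.2.2.1 - (sig + del) * x.2.2.2)

section AlzheimerField

variable {lamu lamp gu gp tau sig del rho mu alpha : ℝ} {n : ℕ}

theorem locallyLipschitz_alzheimerField :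
    LocallyLipschitz (alzheimerField lamu lamp gu gp tau sig del rho mu alpha n) :=
  ContDiff.locallyLipschitz (𝕂 := ℝ) (by unfold alzheimerField; fun_prop)

theorem alzheimerField_nonneg_of_eq_zero (halpha : 0 ≤ alpha) (hlamu : 0 ≤ lamu)
    (hlamp : 0 ≤ lamp) (hsig : 0 ≤ sig) (htau : 0 ≤ tau) (hn : n ≠ 0)
    {y : ℝ × ℝ × ℝ × ℝ} (hy : 0 ≤ y) :
    let F := alzheimerField lamu lamp gu gp tau sig del rho mu alpha n y
    (y.1 = 0 → 0 ≤ F.1) ∧ (y.2.1 = 0 → 0 ≤ F.2.1) ∧ (y.2.2.1 = 0 → 0 ≤ F.2.2.1) ∧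
      (y.2.2.2 = 0 → 0 ≤ F.2.2.2) := by
  obtain ⟨hA, hu, hp, hb⟩ := prod4_nonneg_iff.mp hy
  refine ⟨fun h => ?_, fun h => ?_, fun h => ?_, fun h => ?_⟩ <;>
    simp only [alzheimerField, h, zero_pow hn, mul_zero, zero_mul, sub_zero] <;> positivity

/-- The weights `n, 1, 1, 2` make the exchange terms `α n uⁿ`, `τ u p` and `σ b` cancel. -/
theorem weightedMass_alzheimerField_le (hrho : 0 ≤ rho) {y : ℝ × ℝ × ℝ × ℝ} (hy : 0 ≤ y) :
    weightedMass n (alzheimerField lamu lamp gu gp tau sig del rho mu alpha n y) ≤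
      lamu + lamp - min (min (min mu gu) gp) del * weightedMass n y := by
  obtain ⟨hA, hu, hp, hb⟩ := prod4_nonneg_iff.mp hy
  set m := min (min (min mu gu) gp) del
  have hmmu : m ≤ mu := (min_le_left _ _).trans ((min_le_left _ _).trans (min_le_left _ _))
  have hmgu : m ≤ gu := (min_le_left _ _).trans ((min_le_left _ _).trans (min_le_right _ _))
  have hmgp : m ≤ gp := (min_le_left _ _).trans (min_le_right _ _)
  have hmdel : m ≤ del := min_le_right _ _
  have hnA : 0 ≤ (n : ℝ) * y.1 := by positivity
  simp only [weightedMass, alzheimerField]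
  nlinarith [mul_le_mul_of_nonneg_right hmmu hnA, mul_le_mul_of_nonneg_right hmgu hu,
    mul_le_mul_of_nonneg_right hmgp hp, mul_le_mul_of_nonneg_right hmdel hb,
    mul_nonneg (mul_nonneg hrho hu) hA]

variable {M : ℝ} {x : ℝ → ℝ × ℝ × ℝ × ℝ}

theorem nonneg_of_hasDerivAt_alzheimerField_boxClip
    (hx : ∀ t, HasDerivAt x (alzheimerField lamu lamp gu gp tau sig del rho mu alpha n
      (boxClip M (x t))) t)
    (halpha : 0 ≤ alpha) (hlamu : 0 ≤ lamu) (hlamp : 0 ≤ lamp) (hsig : 0 ≤ sig) (htau : 0 ≤ tau)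
    (hn : n ≠ 0) (hx0 : 0 ≤ x 0)
    {t : ℝ} (ht : 0 ≤ t) : 0 ≤ x t := by
  obtain ⟨hA, hu, hp, hb⟩ := prod4_nonneg_iff.mp hx0
  have hF s := alzheimerField_nonneg_of_eq_zero (gu := gu) (gp := gp) (del := del) (rho := rho)
    (mu := mu) halpha hlamu hlamp hsig htau hn (boxClip_nonneg M (x s))
  refine prod4_nonneg_iff.mpr ⟨?_, ?_, ?_, ?_⟩
  · exact nonneg_of_hasDerivAt_of_deriv_nonneg_of_neg (fun s _ => (hx s).fst) hA
      (fun s _ hs => (hF s).1 (clip_of_neg M hs)) ht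
  · exact nonneg_of_hasDerivAt_of_deriv_nonneg_of_neg (fun s _ => (hx s).snd.fst) hu
      (fun s _ hs => (hF s).2.1 (clip_of_neg M hs)) ht
  · exact nonneg_of_hasDerivAt_of_deriv_nonneg_of_neg (fun s _ => (hx s).snd.snd.fst) hp
      (fun s _ hs => (hF s).2.2.1 (clip_of_neg M hs)) ht
  · exact nonneg_of_hasDerivAt_of_deriv_nonneg_of_neg (fun s _ => (hx s).snd.snd.snd) hb
      (fun s _ hs => (hF s).2.2.2 (clip_of_neg M hs)) ht

theorem weightedMass_le_of_hasDerivAt_alzheimerField_boxClip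
    (hx : ∀ t, HasDerivAt x (alzheimerField lamu lamp gu gp tau sig del rho mu alpha n
      (boxClip M (x t))) t)
    (hrho : 0 ≤ rho) (hm : 0 < min (min (min mu gu) gp) del) (hn : 1 ≤ n)
    (hpos : ∀ t, 0 ≤ t → 0 ≤ x t)
    {B : ℝ} (hx0 : weightedMass n (x 0) ≤ B)
    (hB : (lamu + lamp) / min (min (min mu gu) gp) del ≤ B) (hBM : B < M)
    {t : ℝ} (ht : 0 ≤ t) : weightedMass n (x t) ≤ B := by
  set m := min (min (min mu gu) gp) del
  have hM : 0 ≤ M := ((weightedMass_nonneg n (hpos 0 le_rfl)).trans hx0).trans hBM.le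
  have hmB : lamu + lamp ≤ m * B := (div_le_iff₀' hm).mp hB
  refine le_of_hasDerivAt_of_deriv_nonpos_of_gt (fun s _ => (hx s).weightedMass n) hx0
    (fun s hs hBs => ?_) ht
  calc _ ≤ lamu + lamp - m * weightedMass n (boxClip M (x s)) :=
        weightedMass_alzheimerField_le hrho (boxClip_nonneg M (x s))
    _ ≤ lamu + lamp - m * min (weightedMass n (x s)) M := by
        gcongr; exact min_weightedMass_le_weightedMass_boxClip hn hM (hpos s hs)
    _ ≤ lamu + lamp - m * B := by gcongr; exact le_min hBs.le hBM.le
    _ ≤ 0 := by linarith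

end AlzheimerField

/-- Global well-posedness of the Alzheimer ODE system: for any nonnegative
initial data there is a solution, unique on `[0,∞)`, which is nonnegative and
stays in the stable set `S`. -/
theorem ode_well_posedness
    (lamu lamp gu gp tau sig del rho mu alpha : ℝ)
    (hlamu : 0 < lamu) (hlamp : 0 < lamp) (hgu : 0 < gu) (hgp : 0 < gp)
    (htau : 0 < tau) (hsig : 0 < sig) (hdel : 0 < del) (hrho : 0 < rho)
    (hmu : 0 < mu) (halpha : 0 < alpha)
    (n : ℕ) (hn : 1 ≤ n)
    (Ain uin pin bin : ℝ) (hAin : 0 ≤ Ain) (huin : 0 ≤ uin) (hpin : 0 ≤ pin)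
    (hbin : 0 ≤ bin) :
    ∃ A u p b : ℝ → ℝ,
      (A 0 = Ain ∧ u 0 = uin ∧ p 0 = pin ∧ b 0 = bin) ∧
      (∀ t, 0 ≤ t →
        HasDerivAt A (alpha * u t ^ n - mu * A t) t ∧
        HasDerivAt u (lamu - gu * u t - tau * u t * p t + sig * b t
          - alpha * n * u t ^ n - rho * u t * A t) t ∧
        HasDerivAt p (lamp - gp * p t - tau * u t * p t + sig * b t) t ∧
        HasDerivAt b (tau * u t * p t - (sig + del) * b t) t) ∧
      (∀ t, 0 ≤ t →
        (0 ≤ A t ∧ 0 ≤ u t ∧ 0 ≤ p t ∧ 0 ≤ b t) ∧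
        n * A t + u t + p t + 2 * b t ≤
          n * Ain + uin + pin + 2 * bin + (lamu + lamp) / min (min (min mu gu) gp) del) ∧
      (∀ A' u' p' b' : ℝ → ℝ,
        (A' 0 = Ain ∧ u' 0 = uin ∧ p' 0 = pin ∧ b' 0 = bin) →
        (∀ t, 0 ≤ t →
          HasDerivAt A' (alpha * u' t ^ n - mu * A' t) t ∧
          HasDerivAt u' (lamu - gu * u' t - tau * u' t * p' t + sig * b' t
            - alpha * n * u' t ^ n - rho * u' t * A' t) t ∧
          HasDerivAt p' (lamp - gp * p' t - tau * u' t * p' t + sig * b' t) t ∧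
          HasDerivAt b' (tau * u' t * p' t - (sig + del) * b' t) t) →
        ∀ t, 0 ≤ t → A' t = A t ∧ u' t = u t ∧ p' t = p t ∧ b' t = b t) := by
  set m := min (min (min mu gu) gp) del
  have hm : 0 < m := lt_min (lt_min (lt_min hmu hgu) hgp) hdel
  set x₀ : ℝ × ℝ × ℝ × ℝ := (Ain, uin, pin, bin)
  have hx₀ : 0 ≤ x₀ := prod4_nonneg_iff.mpr ⟨hAin, huin, hpin, hbin⟩
  have hlam : 0 ≤ (lamu + lamp) / m := by positivity
  set B := weightedMass n x₀ + (lamu + lamp) / m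
  have hB : (lamu + lamp) / m ≤ B := le_add_of_nonneg_left (weightedMass_nonneg n hx₀)
  have hM : 0 ≤ B + 1 := by linarith
  obtain ⟨x, hx0, hx⟩ := exists_forall_hasDerivAt_comp_of_isCompact
    locallyLipschitz_alzheimerField (lipschitzWith_boxClip (B + 1)) isCompact_Icc
    (boxClip_mem_Icc hM) x₀
  have hpos : ∀ t, 0 ≤ t → 0 ≤ x t := fun t ht =>
    nonneg_of_hasDerivAt_alzheimerField_boxClip hx halpha.le hlamu.le hlamp.le hsig.le htau.le
      (Nat.one_le_iff_ne_zero.mp hn) (hx0 ▸ hx₀) ht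
  have hmass : ∀ t, 0 ≤ t → weightedMass n (x t) ≤ B := fun t ht =>
    weightedMass_le_of_hasDerivAt_alzheimerField_boxClip hx hrho.le hm hn hpos
      (hx0 ▸ le_add_of_nonneg_right hlam) hB (lt_add_one B) ht
  have hsol : ∀ t, 0 ≤ t → HasDerivAt x
      (alzheimerField lamu lamp gu gp tau sig del rho mu alpha n (x t)) t := fun t ht => by
    simpa only [boxClip_eq_self hn (hpos t ht) ((hmass t ht).trans (lt_add_one B).le)] using hx t
  refine ⟨fun t => (x t).1, fun t => (x t).2.1, fun t => (x t).2.2.1, fun t => (x t).2.2.2,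
    by simp [hx0, x₀], fun t ht => ⟨(hsol t ht).fst, (hsol t ht).snd.fst,
      (hsol t ht).snd.snd.fst, (hsol t ht).snd.snd.snd⟩,
    fun t ht => ⟨prod4_nonneg_iff.mp (hpos t ht), hmass t ht⟩, ?_⟩
  intro A' u' p' b' h0 h' t ht
  have hy := ODE_solution_unique_Ici_of_locallyLipschitz locallyLipschitz_alzheimerField
    (f := fun s => (A' s, u' s, p' s, b' s))
    (fun s hs => let ⟨hA, hu, hp, hb⟩ := h' s hs; hA.prodMk (hu.prodMk (hp.prodMk hb)))
    hsol (by simp [hx0, x₀, h0]) ht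
  simpa [Prod.ext_iff] using hy
end

section
/- Let τ* = τ(1 − σ/(δ+σ)) = τδ/(δ+σ) > 0 and a = τ*(λᵤ − λₚ) − γᵤγₚ. Define P(x) = τ*γᵤx² + αγₚn xⁿ + (ατ*n + ργₚα/μ)xⁿ⁺¹ + ρτ*(α/μ)xⁿ⁺². Then the function Q(x) = γₚλᵤ + a x − P(x) has exactly one positive root, i.e., there is a unique u∞ > 0 with Q(u∞) = 0. -/
/-!
`Q` is an affine function minus a polynomial with nonnegative coefficients and a positive
quadratic term, so it is strictly concave on `[0, ∞)`; it is positive at `0` and, by the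
quadratic term, negative far out. The intermediate value theorem gives a positive root, and
strict concavity excludes a second one: if `0 < p < q` were roots, then
`Q p > min (Q 0) (Q q) = 0`.
-/

open Set

theorem StrictConvexOn.const_mul {𝕜 E : Type*} [Field 𝕜] [LinearOrder 𝕜] [IsStrictOrderedRing 𝕜]
    [AddCommMonoid E] [SMul 𝕜 E] {s : Set E} {f : E → 𝕜} {c : 𝕜} (hc : 0 < c)
    (hf : StrictConvexOn 𝕜 s f) : StrictConvexOn 𝕜 s fun x => c * f x := by
  refine ⟨hf.1, fun x hx y hy hxy a b ha hb hab => ?_⟩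
  have h := mul_lt_mul_of_pos_left (hf.2 hx hy hxy ha hb hab) hc
  simp only [smul_eq_mul] at h ⊢
  linarith

theorem StrictConvexOn.strictConcaveOn_const_add_mul_sub {s : Set ℝ} {P : ℝ → ℝ}
    (hP : StrictConvexOn ℝ s P) (c a : ℝ) : StrictConcaveOn ℝ s fun x => c + a * x - P x :=
  ((concaveOn_const c hP.1).add ((LinearMap.mulLeft ℝ a).concaveOn hP.1)).sub_strictConvexOn hP

theorem exists_pos_add_mul_lt_mul_sq (c a : ℝ) {b : ℝ} (hb : 0 < b) :
    ∃ M > 0, c + a * M < b * M ^ 2 := by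
  refine ⟨(|c| + |a|) / b + 1, by positivity, ?_⟩
  set M := (|c| + |a|) / b + 1 with hM_def
  have hbM : |c| + |a| + b = b * M := by rw [hM_def]; field_simp
  have hM : 1 ≤ M := le_add_of_nonneg_left (by positivity)
  calc c + a * M ≤ |c| * M + |a| * M := by
        nlinarith [le_abs_self c, le_abs_self a, abs_nonneg c]
    _ < (|c| + |a| + b) * M := by nlinarith
    _ = b * M ^ 2 := by rw [hbM]; ring

theorem StrictConcaveOn.existsUnique_pos_root {f : ℝ → ℝ} (hf : StrictConcaveOn ℝ (Ici 0) f)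
    (hcont : ContinuousOn f (Ici 0)) (h0 : 0 < f 0) {M : ℝ} (hM : 0 < M) (hfM : f M < 0) :
    ∃! x, 0 < x ∧ f x = 0 := by
  have below_root : ∀ p q, 0 < p → p < q → f q = 0 → 0 < f p := fun p q hp hpq hq => by
    have hseg : p ∈ openSegment ℝ 0 q := by rw [openSegment_eq_Ioo (hp.trans hpq)]; exact ⟨hp, hpq⟩
    simpa [hq, h0.le] using hf.lt_on_openSegment self_mem_Ici (hp.trans hpq).le
      (hp.trans hpq).ne hseg
  obtain ⟨x, ⟨hx0, -⟩, hx⟩ := intermediate_value_Ioo' hM.le (hcont.mono Icc_subset_Ici_self)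
    ⟨hfM, h0⟩
  refine ⟨x, ⟨hx0, hx⟩, fun y ⟨hy0, hy⟩ => ?_⟩
  rcases lt_trichotomy y x with h | h | h
  · exact absurd hy (below_root y x hy0 h hx).ne'
  · exact h
  · exact absurd hx (below_root x y hx0 h hy).ne'

theorem unique_positive_root_general
    (lamu lamp gu gp tau sig del rho mu alpha : ℝ)
    (hlamu : 0 < lamu) (hgu : 0 < gu) (hgp : 0 < gp)
    (htau : 0 < tau) (hsig : 0 < sig) (hdel : 0 < del) (hrho : 0 < rho)
    (hmu : 0 < mu) (halpha : 0 < alpha)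
    (n : ℕ) :
    ∃! x : ℝ, 0 < x ∧
      gp * lamu + ((tau * del / (del + sig)) * (lamu - lamp) - gu * gp) * x -
        ((tau * del / (del + sig)) * gu * x ^ 2 + alpha * gp * n * x ^ n
          + (alpha * (tau * del / (del + sig)) * n + rho * gp * (alpha / mu)) * x ^ (n + 1)
          + rho * (tau * del / (del + sig)) * (alpha / mu) * x ^ (n + 2)) = 0 := by
  set t := tau * del / (del + sig)
  have ht : 0 < t := by positivity
  have hP : StrictConvexOn ℝ (Ici 0) fun x : ℝ => t * gu * x ^ 2 + alpha * gp * n * x ^ n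
      + (alpha * t * n + rho * gp * (alpha / mu)) * x ^ (n + 1)
      + rho * t * (alpha / mu) * x ^ (n + 2) :=
    ((((strictConvexOn_pow le_rfl).const_mul (by positivity)).add_convexOn
      ((convexOn_pow n).smul (by positivity))).add_convexOn
      ((convexOn_pow (n + 1)).smul (by positivity))).add_convexOn
      ((convexOn_pow (n + 2)).smul (by positivity))
  obtain ⟨M, hM, hgrowth⟩ := exists_pos_add_mul_lt_mul_sq (gp * lamu) (t * (lamu - lamp) - gu * gp)
    (mul_pos ht hgu)
  refine (hP.strictConcaveOn_const_add_mul_sub _ _).existsUnique_pos_root (by fun_prop)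
    -- the term `n * 0 ^ n` vanishes also for `n = 0`
    (by cases n <;> simp <;> positivity) hM ?_
  have hhigher : 0 ≤ alpha * gp * n * M ^ n + (alpha * t * n + rho * gp * (alpha / mu)) * M ^ (n + 1)
      + rho * t * (alpha / mu) * M ^ (n + 2) := by positivity
  linarith

/-- The function `Q(x) = γₚλᵤ + a x - P(x)` has a unique positive root, where
`a = τ*(λᵤ - λₚ) - γᵤγₚ`, `τ* = τδ/(δ+σ)` and
`P(x) = τ*γᵤx² + αγₚn xⁿ + (ατ*n + ργₚα/μ)xⁿ⁺¹ + ρτ*(α/μ)xⁿ⁺²`. -/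
theorem unique_positive_root
    (lamu lamp gu gp tau sig del rho mu alpha : ℝ)
    (hlamu : 0 < lamu) (hlamp : 0 < lamp) (hgu : 0 < gu) (hgp : 0 < gp)
    (htau : 0 < tau) (hsig : 0 < sig) (hdel : 0 < del) (hrho : 0 < rho)
    (hmu : 0 < mu) (halpha : 0 < alpha)
    (n : ℕ) (hn : 1 ≤ n) :
    ∃! x : ℝ, 0 < x ∧
      gp * lamu + ((tau * del / (del + sig)) * (lamu - lamp) - gu * gp) * x -
        ((tau * del / (del + sig)) * gu * x ^ 2 + alpha * gp * n * x ^ n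
          + (alpha * (tau * del / (del + sig)) * n + rho * gp * (alpha / mu)) * x ^ (n + 1)
          + rho * (tau * del / (del + sig)) * (alpha / mu) * x ^ (n + 2)) = 0 :=
  unique_positive_root_general lamu lamp gu gp tau sig del rho mu alpha hlamu hgu hgp htau hsig hdel
    hrho hmu halpha n
end

section
/- The ODE system A' = αuⁿ − μA, u' = λᵤ − γᵤu − τup + σb − αnuⁿ − ρuA, p' = λₚ − γₚp − τup + σb, b' = τup − (σ+δ)b has a unique positive steady state (A∞, u∞, p∞, b∞) given by A∞ = (α/μ)u∞ⁿ, p∞ = λₚ/(τ*u∞ + γₚ), b∞ = (1/σ)·λₚ(τ − τ*)u∞/(τ*u∞ + γₚ), where τ* = τδ/(δ+σ) and u∞ is the unique positive root of Q(x) = γₚλᵤ + (τ*(λᵤ−λₚ) − γᵤγₚ)x − P(x) with P(x) = τ*γᵤx² + αγₚn xⁿ + (ατ*n + ργₚα/μ)xⁿ⁺¹ + ρτ*(α/μ)xⁿ⁺². -/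
lemma aux_root_unique (lamu lamp gu gp t alpha c : ℝ)
    (hlamp : 0 < lamp) (hgu : 0 < gu) (hgp : 0 < gp) (ht : 0 < t)
    (halpha : 0 < alpha) (hc : 0 < c) (n : ℕ) (hn : 1 ≤ n)
    {a b : ℝ} (ha : 0 < a) (hb : 0 < b)
    (hfa : lamu - gu*a - lamp*t*a/(t*a+gp) - alpha*n*a^n - c*a^(n+1) = 0)
    (hfb : lamu - gu*b - lamp*t*b/(t*b+gp) - alpha*n*b^n - c*b^(n+1) = 0) :
    a = b := by
  have key : ∀ x y : ℝ, 0 < x → x < y →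
      lamu - gu*y - lamp*t*y/(t*y+gp) - alpha*n*y^n - c*y^(n+1)
        < lamu - gu*x - lamp*t*x/(t*x+gp) - alpha*n*x^n - c*x^(n+1) := by
    intro x y hx hxy
    have hy : 0 < y := hx.trans hxy
    have hDx : 0 < t*x+gp := by nlinarith [mul_pos ht hx]
    have hDy : 0 < t*y+gp := by nlinarith [mul_pos ht hy]
    have h1 : lamp*t*x/(t*x+gp) < lamp*t*y/(t*y+gp) := by
      rw [div_lt_div_iff₀ hDx hDy]
      nlinarith [mul_pos (mul_pos hlamp ht) hgp]
    have h2 : x^n ≤ y^n := pow_le_pow_left₀ hx.le hxy.le n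
    have h3 : x^(n+1) < y^(n+1) := pow_lt_pow_left₀ hxy hx.le (by omega)
    have h4 : alpha*n*x^n ≤ alpha*n*y^n := by
      have : (0:ℝ) ≤ alpha*n := by positivity
      nlinarith
    have h5 : c*x^(n+1) < c*y^(n+1) := by nlinarith
    nlinarith
  rcases lt_trichotomy a b with h | h | h
  · have := key a b ha h; linarith
  · exact h
  · have := key b a hb h; linarith

lemma aux_root_exists (lamu lamp gu gp t alpha c : ℝ)
    (hlamu : 0 < lamu) (hlamp : 0 < lamp) (hgu : 0 < gu) (hgp : 0 < gp)
    (ht : 0 < t) (halpha : 0 < alpha) (hc : 0 < c) (n : ℕ) (hn : 1 ≤ n) :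
    ∃ u : ℝ, 0 < u ∧
      lamu - gu*u - lamp*t*u/(t*u+gp) - alpha*n*u^n - c*u^(n+1) = 0 := by
  set M : ℝ := lamu/gu with hM
  have hMpos : 0 < M := by rw [hM]; positivity
  set f : ℝ → ℝ := fun x => lamu - gu*x - lamp*t*x/(t*x+gp) - alpha*n*x^n - c*x^(n+1) with hf
  have hcont : ContinuousOn f (Set.Icc 0 M) := by
    apply ContinuousOn.sub
    apply ContinuousOn.sub
    apply ContinuousOn.sub
    · fun_prop
    · apply ContinuousOn.div (by fun_prop) (by fun_prop)
      intro x hx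
      have h0 : 0 ≤ x := hx.1
      have : 0 < t*x+gp := by nlinarith [mul_nonneg ht.le h0]
      exact this.ne'
    · fun_prop
    · fun_prop
  have hf0 : f 0 = lamu := by
    show lamu - gu*0 - lamp*t*0/(t*0+gp) - alpha*n*0^n - c*0^(n+1) = lamu
    rw [zero_pow (by omega : n ≠ 0), zero_pow (by omega : n+1 ≠ 0)]
    ring
  have hfM : f M ≤ 0 := by
    have h1 : gu * M = lamu := by rw [hM]; field_simp
    have h2 : 0 ≤ lamp*t*M/(t*M+gp) := by
      apply div_nonneg (by positivity)
      nlinarith [mul_pos ht hMpos]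
    have h3 : 0 ≤ alpha*n*M^n := by positivity
    have h4 : 0 ≤ c*M^(n+1) := by positivity
    show lamu - gu*M - lamp*t*M/(t*M+gp) - alpha*n*M^n - c*M^(n+1) ≤ 0
    linarith
  have hmem : (0:ℝ) ∈ Set.Icc (f M) (f 0) := ⟨hfM, by rw [hf0]; exact hlamu.le⟩
  obtain ⟨u, humem, hu0⟩ := intermediate_value_Icc' hMpos.le hcont hmem
  refine ⟨u, ?_, hu0⟩
  rcases eq_or_lt_of_le humem.1 with h | h
  · exfalso; rw [← h] at hu0; rw [hf0] at hu0; linarith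
  · exact h

set_option maxHeartbeats 1000000

/-- Unique positive steady state of the Alzheimer ODE system, with explicit
formulas in terms of the unique positive root `u∞` of `Q`. -/
theorem unique_positive_steady_state
    (lamu lamp gu gp tau sig del rho mu alpha : ℝ)
    (hlamu : 0 < lamu) (hlamp : 0 < lamp) (hgu : 0 < gu) (hgp : 0 < gp)
    (htau : 0 < tau) (hsig : 0 < sig) (hdel : 0 < del) (hrho : 0 < rho)
    (hmu : 0 < mu) (halpha : 0 < alpha)
    (n : ℕ) (hn : 1 ≤ n) :
    (∃! s : ℝ × ℝ × ℝ × ℝ,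
      (0 < s.1 ∧ 0 < s.2.1 ∧ 0 < s.2.2.1 ∧ 0 < s.2.2.2) ∧
      mu * s.1 = alpha * s.2.1 ^ n ∧
      lamu - gu * s.2.1 - tau * s.2.1 * s.2.2.1 + sig * s.2.2.2
        - alpha * n * s.2.1 ^ n - rho * s.2.1 * s.1 = 0 ∧
      lamp - gp * s.2.2.1 - tau * s.2.1 * s.2.2.1 + sig * s.2.2.2 = 0 ∧
      tau * s.2.1 * s.2.2.1 = (del + sig) * s.2.2.2) ∧
    (∀ s : ℝ × ℝ × ℝ × ℝ,
      ((0 < s.1 ∧ 0 < s.2.1 ∧ 0 < s.2.2.1 ∧ 0 < s.2.2.2) ∧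
      mu * s.1 = alpha * s.2.1 ^ n ∧
      lamu - gu * s.2.1 - tau * s.2.1 * s.2.2.1 + sig * s.2.2.2
        - alpha * n * s.2.1 ^ n - rho * s.2.1 * s.1 = 0 ∧
      lamp - gp * s.2.2.1 - tau * s.2.1 * s.2.2.1 + sig * s.2.2.2 = 0 ∧
      tau * s.2.1 * s.2.2.1 = (del + sig) * s.2.2.2) →
      s.1 = (alpha / mu) * s.2.1 ^ n ∧
      s.2.2.1 = lamp / ((tau * del / (del + sig)) * s.2.1 + gp) ∧
      s.2.2.2 = (1 / sig) * lamp * (tau - tau * del / (del + sig)) * s.2.1 /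
        ((tau * del / (del + sig)) * s.2.1 + gp) ∧
      gp * lamu + ((tau * del / (del + sig)) * (lamu - lamp) - gu * gp) * s.2.1 -
        ((tau * del / (del + sig)) * gu * s.2.1 ^ 2 + alpha * gp * n * s.2.1 ^ n
          + (alpha * (tau * del / (del + sig)) * n + rho * gp * (alpha / mu)) * s.2.1 ^ (n + 1)
          + rho * (tau * del / (del + sig)) * (alpha / mu) * s.2.1 ^ (n + 2)) = 0) := by
  have hds : 0 < del + sig := by linarith
  obtain ⟨t, htdef⟩ : ∃ t : ℝ, t = tau * del / (del + sig) := ⟨_, rfl⟩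
  rw [← htdef]
  have htpos : 0 < t := by rw [htdef]; positivity
  have hcpos : 0 < rho * (alpha / mu) := by positivity
  -- Extraction: the formulas forced by the equations
  have extract : ∀ A u p b : ℝ, 0 < u →
      mu*A = alpha*u^n →
      lamu - gu*u - tau*u*p + sig*b - alpha*(n:ℝ)*u^n - rho*u*A = 0 →
      lamp - gp*p - tau*u*p + sig*b = 0 →
      tau*u*p = (del+sig)*b →
      A = (alpha/mu)*u^n ∧ p = lamp/(t*u+gp) ∧
      b = (1/sig)*lamp*(tau-t)*u/(t*u+gp) ∧
      lamu - gu*u - lamp*t*u/(t*u+gp) - alpha*(n:ℝ)*u^n - (rho*(alpha/mu))*u^(n+1) = 0 := by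
    intro A u p b hu e1 e2 e3 e4
    have hD : 0 < t*u+gp := by nlinarith [mul_pos htpos hu]
    have hA' : A = (alpha/mu)*u^n := by
      field_simp
      linarith
    have hpl : p*(t*u+gp) = lamp := by
      rw [htdef]
      field_simp
      linear_combination (-(del+sig))*e3 - sig*e4
    have hp' : p = lamp/(t*u+gp) := by rw [eq_div_iff hD.ne']; exact hpl
    have hb1 : b = tau*u*p/(del+sig) := by rw [eq_div_iff hds.ne']; linarith [e4]
    have hb' : b = (1/sig)*lamp*(tau-t)*u/(t*u+gp) := by
      rw [hb1, hp', htdef]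
      have hD0 : tau * del / (del + sig) * u + gp ≠ 0 := by rw [htdef] at hD; exact hD.ne'
      field_simp
      ring
    have h5 : tau*u*p - sig*b = lamp*t*u/(t*u+gp) := by
      rw [hp', hb', htdef]
      have hD0 : tau * del / (del + sig) * u + gp ≠ 0 := by rw [htdef] at hD; exact hD.ne'
      field_simp
      ring
    refine ⟨hA', hp', hb', ?_⟩
    rw [hA'] at e2
    linear_combination e2 + h5
  -- From the root equation to Q = 0
  have qzero : ∀ u : ℝ, 0 < u →
      lamu - gu*u - lamp*t*u/(t*u+gp) - alpha*(n:ℝ)*u^n - (rho*(alpha/mu))*u^(n+1) = 0 →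
      gp * lamu + (t * (lamu - lamp) - gu * gp) * u -
        (t * gu * u ^ 2 + alpha * gp * n * u ^ n
          + (alpha * t * n + rho * gp * (alpha / mu)) * u ^ (n + 1)
          + rho * t * (alpha / mu) * u ^ (n + 2)) = 0 := by
    intro u hu hf
    have hD : 0 < t*u+gp := by nlinarith [mul_pos htpos hu]
    have hf2 : lamp*t*u = (lamu - gu*u - alpha*(n:ℝ)*u^n - (rho*(alpha/mu))*u^(n+1))*(t*u+gp) := by
      rw [← div_eq_iff hD.ne'] at *
      · linarith
    linear_combination -hf2
  -- the root
  obtain ⟨u, hu, hfu⟩ := aux_root_exists lamu lamp gu gp t alpha (rho*(alpha/mu))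
    hlamu hlamp hgu hgp htpos halpha hcpos n hn
  have hD : 0 < t*u+gp := by nlinarith [mul_pos htpos hu]
  have hD0 : tau * del / (del + sig) * u + gp ≠ 0 := by rw [htdef] at hD; exact hD.ne'
  have htt : tau - t = tau*sig/(del+sig) := by rw [htdef]; field_simp; ring
  constructor
  · refine ⟨((alpha/mu)*u^n, u, lamp/(t*u+gp), (1/sig)*lamp*(tau-t)*u/(t*u+gp)), ⟨⟨?_, ?_, ?_, ?_⟩, ?_, ?_, ?_, ?_⟩, ?_⟩
    · show 0 < (alpha/mu)*u^n; positivity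
    · exact hu
    · show 0 < lamp/(t*u+gp); exact div_pos hlamp hD
    · show 0 < (1/sig)*lamp*(tau-t)*u/(t*u+gp)
      apply div_pos _ hD
      rw [htt]; positivity
    · show mu*((alpha/mu)*u^n) = alpha*u^n
      field_simp
    · show lamu - gu*u - tau*u*(lamp/(t*u+gp)) + sig*((1/sig)*lamp*(tau-t)*u/(t*u+gp))
        - alpha*(n:ℝ)*u^n - rho*u*((alpha/mu)*u^n) = 0
      have h5 : tau*u*(lamp/(t*u+gp)) - sig*((1/sig)*lamp*(tau-t)*u/(t*u+gp)) = lamp*t*u/(t*u+gp) := by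
        rw [htdef]
        field_simp
        ring
      linear_combination hfu - h5
    · show lamp - gp*(lamp/(t*u+gp)) - tau*u*(lamp/(t*u+gp)) + sig*((1/sig)*lamp*(tau-t)*u/(t*u+gp)) = 0
      rw [htdef]
      field_simp
      ring
    · show tau*u*(lamp/(t*u+gp)) = (del+sig)*((1/sig)*lamp*(tau-t)*u/(t*u+gp))
      rw [htdef]
      field_simp
      ring
    · rintro ⟨A, u', p, b⟩ ⟨⟨hA1, hu1, hp1, hb1⟩, e1, e2, e3, e4⟩
      obtain ⟨hA', hp', hb', hf'⟩ := extract A u' p b hu1 e1 e2 e3 e4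
      have huu : u' = u := aux_root_unique lamu lamp gu gp t alpha (rho*(alpha/mu))
        hlamp hgu hgp htpos halpha hcpos n hn hu1 hu hf' hfu
      subst huu
      simp only [Prod.mk.injEq]
      exact ⟨hA', trivial, hp', hb'⟩
  · rintro ⟨A, u', p, b⟩ ⟨⟨hA1, hu1, hp1, hb1⟩, e1, e2, e3, e4⟩
    obtain ⟨hA', hp', hb', hf'⟩ := extract A u' p b hu1 e1 e2 e3 e4
    exact ⟨hA', hp', hb', qzero u' hu1 hf'⟩
end

section
/- Any solution (f,u,p,b) of the full PDE-ODE system satisfies the differential inequality d/dt(u + p + 2b) ≤ λ − m(u + p + 2b), where λ = λᵤ + λₚ and m = min(γᵤ, γₚ, δ); hence by Gronwall, u(t) + p(t) + 2b(t) ≤ uⁱⁿ + pⁱⁿ + 2bⁱⁿ + λ/m for all t ≥ 0, which allows extension of the local solution to a global one. -/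
/-- For the full PDE-ODE system, `u + p + 2b` satisfies
`d/dt(u+p+2b) ≤ λ - m (u+p+2b)` with `λ = λᵤ+λₚ`, `m = min(γᵤ,γₚ,δ)`, and hence
`u(t)+p(t)+2b(t) ≤ uⁱⁿ+pⁱⁿ+2bⁱⁿ + λ/m` for all `t ≥ 0`.
Here `I t = ∫ ρ f dx ≥ 0` is the total polymerization and `Nu t = N(u t) ≥ 0`. -/
theorem global_bound_upb
    (lamu lamp gu gp tau sig del : ℝ)
    (hlamu : 0 < lamu) (hlamp : 0 < lamp) (hgu : 0 < gu) (hgp : 0 < gp)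
    (htau : 0 < tau) (hsig : 0 < sig) (hdel : 0 < del)
    (n : ℕ) (hn : 1 ≤ n)
    (u p b I Nu : ℝ → ℝ)
    (hI : ∀ t, 0 ≤ t → 0 ≤ I t) (hNu : ∀ t, 0 ≤ t → 0 ≤ Nu t)
    (hu : ∀ t, 0 ≤ t → HasDerivAt u
      (lamu - gu * u t - tau * u t * p t + sig * b t - n * Nu t - u t * I t) t)
    (hp : ∀ t, 0 ≤ t → HasDerivAt p (lamp - gp * p t - tau * u t * p t + sig * b t) t)
    (hb : ∀ t, 0 ≤ t → HasDerivAt b (tau * u t * p t - (sig + del) * b t) t)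
    (hpos : ∀ t, 0 ≤ t → 0 ≤ u t ∧ 0 ≤ p t ∧ 0 ≤ b t) :
    (∀ t, 0 ≤ t →
      deriv (fun s => u s + p s + 2 * b s) t ≤
        (lamu + lamp) - min (min gu gp) del * (u t + p t + 2 * b t)) ∧
    (∀ t, 0 ≤ t →
      u t + p t + 2 * b t ≤ u 0 + p 0 + 2 * b 0 + (lamu + lamp) / min (min gu gp) del) := by
  set m := min (min gu gp) del with hm
  have hmpos : 0 < m := lt_min (lt_min hgu hgp) hdel
  have hmgu : m ≤ gu := le_trans (min_le_left _ _) (min_le_left _ _)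
  have hmgp : m ≤ gp := le_trans (min_le_left _ _) (min_le_right _ _)
  have hmdel : m ≤ del := min_le_right _ _
  set L := lamu + lamp with hL
  clear_value m L
  set v : ℝ → ℝ := fun s => u s + p s + 2 * b s with hv
  have hvd : ∀ t, 0 ≤ t → HasDerivAt v
      ((lamu - gu * u t - tau * u t * p t + sig * b t - n * Nu t - u t * I t)
        + (lamp - gp * p t - tau * u t * p t + sig * b t)
        + 2 * (tau * u t * p t - (sig + del) * b t)) t := by
    intro t ht
    rw [hv]
    exact ((hu t ht).add (hp t ht)).add ((hb t ht).const_mul 2)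
  clear_value v
  have hvle : ∀ t, 0 ≤ t →
      (lamu - gu * u t - tau * u t * p t + sig * b t - n * Nu t - u t * I t)
        + (lamp - gp * p t - tau * u t * p t + sig * b t)
        + 2 * (tau * u t * p t - (sig + del) * b t) ≤ L - m * v t := by
    intro t ht
    obtain ⟨hu0, hp0, hb0⟩ := hpos t ht
    have hN := hNu t ht
    have hIt := hI t ht
    have hn1 : (1 : ℝ) ≤ (n : ℝ) := by exact_mod_cast hn
    have h1 : m * u t ≤ gu * u t := mul_le_mul_of_nonneg_right hmgu hu0
    have h2 : m * p t ≤ gp * p t := mul_le_mul_of_nonneg_right hmgp hp0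
    have h3 : m * b t ≤ del * b t := mul_le_mul_of_nonneg_right hmdel hb0
    have h4 : 0 ≤ (n : ℝ) * Nu t := mul_nonneg (by positivity) hN
    have h5 : 0 ≤ u t * I t := mul_nonneg hu0 hIt
    simp only [hv, hL]
    nlinarith
  constructor
  · intro t ht
    have := (hvd t ht).deriv
    calc deriv v t = _ := this
    _ ≤ L - m * v t := hvle t ht
    _ = L - m * (u t + p t + 2 * b t) := by rw [hv]
  · intro t ht
    -- g s = exp(m s) * (v s - L/m) is antitone on [0,∞)
    set g : ℝ → ℝ := fun s => Real.exp (m * s) * (v s - L / m) with hg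
    clear_value g
    have hgd : ∀ s, 0 ≤ s → HasDerivAt g
        (m * Real.exp (m * s) * (v s - L / m) + Real.exp (m * s) *
          ((lamu - gu * u s - tau * u s * p s + sig * b s - n * Nu s - u s * I s)
            + (lamp - gp * p s - tau * u s * p s + sig * b s)
            + 2 * (tau * u s * p s - (sig + del) * b s))) s := by
      intro s hs
      have he : HasDerivAt (fun x => Real.exp (m * x)) (m * Real.exp (m * s)) s := by
        simpa [mul_comm] using ((hasDerivAt_id s).const_mul m).exp
      rw [hg]
      exact he.mul ((hvd s hs).sub_const (L / m))
    have hganti : AntitoneOn g (Set.Ici 0) := by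
      apply antitoneOn_of_deriv_nonpos (convex_Ici 0)
      · exact fun s hs => ((hgd s hs).continuousAt).continuousWithinAt
      · intro s hs
        rw [interior_Ici] at hs
        exact ((hgd s (le_of_lt hs)).differentiableAt).differentiableWithinAt
      · intro s hs
        rw [interior_Ici] at hs
        rw [(hgd s (le_of_lt hs)).deriv]
        have hle := hvle s (le_of_lt hs)
        have hexp : (0:ℝ) < Real.exp (m * s) := Real.exp_pos _
        have : m * Real.exp (m * s) * (v s - L / m) + Real.exp (m * s) *
            ((lamu - gu * u s - tau * u s * p s + sig * b s - n * Nu s - u s * I s)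
              + (lamp - gp * p s - tau * u s * p s + sig * b s)
              + 2 * (tau * u s * p s - (sig + del) * b s))
            ≤ m * Real.exp (m * s) * (v s - L / m) + Real.exp (m * s) * (L - m * v s) := by
          have := mul_le_mul_of_nonneg_left hle hexp.le
          linarith
        refine this.trans (le_of_eq ?_)
        field_simp
        ring
    have hgt : g t ≤ g 0 := hganti (Set.self_mem_Ici) ht ht
    have hg0 : g 0 = v 0 - L / m := by simp [hg]
    have hexp1 : (1:ℝ) ≤ Real.exp (m * t) := by
      rw [Real.one_le_exp_iff]
      positivity
    have hv0 : 0 ≤ v 0 := by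
      obtain ⟨h1, h2, h3⟩ := hpos 0 le_rfl
      simp only [hv]; linarith
    have hLm : 0 ≤ L / m :=
      div_nonneg (by rw [hL]; positivity) hmpos.le
    -- conclude
    have key : v t ≤ v 0 + L / m := by
      rcases le_or_gt (v t) (L / m) with h | h
      · linarith
      · have hpos' : 0 ≤ v t - L / m := by linarith
        have : v t - L / m ≤ Real.exp (m * t) * (v t - L / m) := by
          nlinarith
        have h2 : Real.exp (m * t) * (v t - L / m) ≤ v 0 - L / m := by
          calc Real.exp (m * t) * (v t - L / m) = g t := by rw [hg]
          _ ≤ g 0 := hgt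
          _ = v 0 - L / m := hg0
        linarith
    simpa [hv] using key
end
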